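/- arXiv:2306.16105 — 3 statements merged into one kernel-verified Lean document; each statement's English description precedes it below -/
import Mathlib

section
/- Let A be an n×n matrix over a field K whose minimal polynomial μ_A is irreducible over K. Then K[A] is a field, and for every nonzero vector v ∈ K^n, the vectors v, Av, …, A^{n-1}v form a basis of K^n (equivalently, the matrix whose j-th column is A^{j-1}v is invertible). -/
/-!
The kernel of `aeval A : K[X] → K[A]` is generated by the irreducible `μ_A`, so `K[A]` is the
field `K[X]/(μ_A)`. A nonzero element of a field of matrices is invertible, hence kills no
nonzero vector; so `M ↦ M v` is injective on `K[A]`, and it carries the linearly independent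
powers `1, A, …, A^{n-1}` to `v, Av, …, A^{n-1}v`.
-/

open Polynomial Matrix

theorem Algebra.isField_adjoin_singleton_of_irreducible_minpoly {K S : Type*} [Field K] [Ring S]
    [Algebra K S] {x : S} (hirr : Irreducible (minpoly K x)) :
    IsField (Algebra.adjoin K {x}) := by
  have hmax : (RingHom.ker (aeval (R := K) x)).IsMaximal := by
    rw [minpoly.ker_aeval_eq_span_minpoly]
    exact PrincipalIdealRing.isMaximal_of_irreducible hirr
  rw [Algebra.adjoin_singleton_eq_range_aeval]
  exact (Ideal.quotientKerEquivRange (aeval (R := K) x)).symm.toMulEquiv.isField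
    ((Ideal.Quotient.maximal_ideal_iff_isField_quotient _).mp hmax)

theorem Matrix.eq_zero_of_mulVec_eq_zero_of_isField {R ι : Type*} [CommRing R] [Fintype ι]
    [DecidableEq ι] {S : Subalgebra R (Matrix ι ι R)} (hS : IsField S) {M : Matrix ι ι R}
    (hM : M ∈ S) {v : ι → R} (hv : v ≠ 0) (hMv : M *ᵥ v = 0) : M = 0 := by
  by_contra hM0
  obtain ⟨N, hNM⟩ := hS.mul_inv_cancel (a := ⟨M, hM⟩) (by simpa [Subtype.ext_iff] using hM0)
  rw [hS.mul_comm] at hNM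
  apply hv
  calc v = ((N * ⟨M, hM⟩ : S) : Matrix ι ι R) *ᵥ v := by rw [hNM]; simp
    _ = 0 := by rw [Subalgebra.coe_mul, ← mulVec_mulVec, hMv, mulVec_zero]

theorem Matrix.linearIndependent_pow_mulVec_of_irreducible_minpoly {K ι : Type*} [Field K]
    [Fintype ι] [DecidableEq ι] {A : Matrix ι ι K} (hirr : Irreducible (minpoly K A))
    {v : ι → K} (hv : v ≠ 0) :
    LinearIndependent K fun j : Fin (minpoly K A).natDegree => (A ^ (j : ℕ)) *ᵥ v := by
  let f : Matrix ι ι K →ₗ[K] ι → K := LinearMap.applyₗ v ∘ₗ Matrix.toLin'.toLinearMap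
  refine (linearIndependent_pow A).map (f := f) ?_
  rw [Submodule.disjoint_def]
  intro M hspan hker
  refine eq_zero_of_mulVec_eq_zero_of_isField
    (Algebra.isField_adjoin_singleton_of_irreducible_minpoly hirr) ?_ hv hker
  refine (Subalgebra.mem_toSubmodule _).mp <| Submodule.span_le.mpr ?_ hspan
  rintro _ ⟨j, rfl⟩
  exact Subalgebra.pow_mem _ (Algebra.self_mem_adjoin_singleton K A) _

/-- If the minimal polynomial of an `n × n` matrix `A` over a field `K` is
irreducible (of degree `n`), then `K[A]` is a field, and for every nonzero vector `v`,
the vectors `v, Av, …, A^{n-1}v` are linearly independent (hence a basis of `K^n`);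
equivalently, the matrix whose `j`-th column is `A^{j-1}v` is invertible. -/
theorem stmt_2 {K : Type*} [Field K] {n : ℕ}
    (A : Matrix (Fin n) (Fin n) K)
    (hirr : Irreducible (minpoly K A))
    (hdeg : (minpoly K A).natDegree = n) :
    IsField ↥(Algebra.adjoin K {A}) ∧
    ∀ v : Fin n → K, v ≠ 0 →
      LinearIndependent K (fun j : Fin n => (A ^ (j : ℕ)).mulVec v) ∧
      IsUnit (Matrix.of fun i j : Fin n => (A ^ (j : ℕ)).mulVec v i) := by
  refine ⟨Algebra.isField_adjoin_singleton_of_irreducible_minpoly hirr, fun v hv => ?_⟩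
  have hli := linearIndependent_pow_mulVec_of_irreducible_minpoly hirr hv
  rw [hdeg] at hli
  exact ⟨hli, linearIndependent_cols_iff_isUnit.mp hli⟩
end

section
/- Let Λ be the homology ring of the affine Grassmannian with Schubert basis {ξ_w : w ∈ W_a^{Λ₀}} and factorization property ξ_{w ⋆ t_{ω_i}} = ξ_w · ξ_{t_{ω_i}} for all w ∈ W_a^{Λ₀} and fundamental weights ω_i. Then the elements ξ_{t_{ω_1}}, …, ξ_{t_{ω_n}} are algebraically independent over ℚ. -/
open MvPolynomial

theorem MvPolynomial.aeval_toLinearMap_eq_constr {R A ι : Type*} [CommRing R] [CommRing A]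
    [Algebra R A] (x : ι → A) :
    (aeval x).toLinearMap =
      (basisMonomials ι R).constr R fun m : ι →₀ ℕ => m.prod fun i k => x i ^ k :=
  (basisMonomials ι R).ext fun m => by
    rw [Module.Basis.constr_basis, AlgHom.toLinearMap_apply, coe_basisMonomials, aeval_monomial,
      map_one, one_mul]

theorem algebraicIndependent_iff_linearIndependent_monomials {R A ι : Type*} [CommRing R]
    [CommRing A] [Algebra R A] (x : ι → A) :
    AlgebraicIndependent R x ↔
      LinearIndependent R fun m : ι →₀ ℕ => m.prod fun i k => x i ^ k := by
  rw [algebraicIndependent_iff_injective_aeval]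
  constructor
  · intro h
    have hker : LinearMap.ker (aeval (R := R) x).toLinearMap = ⊥ :=
      LinearMap.ker_eq_bot.mpr h
    simpa [Function.comp_def, aeval_monomial] using
      (basisMonomials ι R).linearIndependent.map' _ hker
  · intro h
    have := (basisMonomials ι R).injective_constr_of_linearIndependent (R₂ := R) h
    rwa [← aeval_toLinearMap_eq_constr] at this

/-- Let `Λ` be the homology ring of the affine Grassmannian, a commutative
`ℚ`-algebra with Schubert basis `{ξ_w : w ∈ W_a^{Λ₀}}`, and suppose (factorization property)
that for each multi-exponent `m` the monomial `ξ_{t_{ω_1}}^{m_1} ⋯ ξ_{t_{ω_n}}^{m_n}` is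
itself a basis element `ξ_{idx m}`, distinct monomials giving distinct basis elements.
Then the elements `ξ_{t_{ω_1}}, …, ξ_{t_{ω_n}}` are algebraically independent over `ℚ`. -/
theorem stmt_13 {Λ : Type*} [CommRing Λ] [Algebra ℚ Λ] {Wgr : Type*}
    (ξ : Module.Basis Wgr ℚ Λ) {n : ℕ} (x : Fin n → Λ)
    (idx : (Fin n → ℕ) → Wgr) (hinj : Function.Injective idx)
    (hmon : ∀ m : Fin n → ℕ, ξ (idx m) = ∏ i : Fin n, x i ^ m i) :
    AlgebraicIndependent ℚ x := by
  rw [algebraicIndependent_iff_linearIndependent_monomials]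
  have hmonomials : (fun m : Fin n →₀ ℕ => m.prod fun i k => x i ^ k) = ξ ∘ idx ∘ (⇑) := by
    ext m
    simp [hmon, Finsupp.prod_fintype]
  rw [hmonomials]
  exact ξ.linearIndependent.comp _ (hinj.comp DFunLike.coe_injective)
end

section
/- Let Γ be a finite strongly connected graph with adjacency matrix A over the field K, multiplicative at vertex v_{i0} (i.e., there is an n-dimensional commutative K-algebra Λ, x ∈ Λ, and basis B = (b_1,…,b_n) with b_{i0} = 1 and Mat_B(m_x) = A) and of maximal dimension (deg μ_A = n). Then the basis B with b_{i0} = 1 satisfying Mat_B(m_x) = A is unique. -/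
/-- Let `Γ` be a finite strongly connected graph with adjacency matrix `A`
over `K`, multiplicative at vertex `v_{i0}` and of maximal dimension
(`deg μ_A = n`).  Then the basis `B = (b_1, …, b_n)` with `b_{i0} = 1` satisfying
`Mat_B(m_x) = A` is unique (as a tuple of elements of the commutative matrix algebra
`K[A]`): if `b` and `b'` are two linearly independent families in `K[A]` with
`b i0 = b' i0 = 1` and `A · b_j = Σ_i A_{ij} b_i` (and likewise for `b'`), then `b = b'`. -/
theorem stmt_18 {K : Type*} [Field K] {n : ℕ}
    (A : Matrix (Fin n) (Fin n) K) (i0 : Fin n)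
    (hconn : ∀ i j : Fin n, ∃ m : ℕ, (A ^ m) i j ≠ 0)
    (hdeg : (minpoly K A).natDegree = n)
    (b b' : Fin n → Matrix (Fin n) (Fin n) K)
    (hb1 : ∀ j, b j ∈ Algebra.adjoin K {A})
    (hb2 : LinearIndependent K b)
    (hb3 : b i0 = 1)
    (hb4 : ∀ j, A * b j = ∑ i : Fin n, A i j • b i)
    (hb'1 : ∀ j, b' j ∈ Algebra.adjoin K {A})
    (hb'2 : LinearIndependent K b')
    (hb'3 : b' i0 = 1)
    (hb'4 : ∀ j, A * b' j = ∑ i : Fin n, A i j • b' i) :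
    b = b' := by
  -- Key: any element M of K[A] equals ∑ i, M i i0 • c i for a good family c
  have key : ∀ (c : Fin n → Matrix (Fin n) (Fin n) K), c i0 = 1 →
      (∀ j, A * c j = ∑ i : Fin n, A i j • c i) →
      ∀ M ∈ Algebra.adjoin K {A}, M = ∑ i, M i i0 • c i := by
    intro c hc3 hc4 M hM
    have hpow : ∀ m : ℕ, (A ^ m) = ∑ i, (A ^ m) i i0 • c i := by
      intro m
      induction m with
      | zero => simp [Matrix.one_apply, hc3]
      | succ m ih =>
        have h1 : A ^ (m+1) = A * A ^ m := by rw [pow_succ']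
        rw [h1]
        conv_lhs => rw [ih]
        rw [Matrix.mul_sum]
        simp_rw [Matrix.mul_smul, hc4, Finset.smul_sum, smul_smul]
        rw [Finset.sum_comm]
        refine Finset.sum_congr rfl fun k _ => ?_
        rw [← Finset.sum_smul, Matrix.mul_apply]
        congr 1
        exact Finset.sum_congr rfl fun i _ => mul_comm _ _
    rw [Algebra.adjoin_singleton_eq_range_aeval] at hM
    obtain ⟨p, hp⟩ := hM
    have hsum : M = ∑ m ∈ Finset.range (p.natDegree + 1), p.coeff m • A ^ m := by
      rw [← hp]; exact Polynomial.aeval_eq_sum_range A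
    calc M = ∑ m ∈ Finset.range (p.natDegree + 1), p.coeff m • A ^ m := hsum
      _ = ∑ m ∈ Finset.range (p.natDegree + 1), ∑ i, (p.coeff m * (A ^ m) i i0) • c i := by
          refine Finset.sum_congr rfl fun m _ => ?_
          conv_lhs => rw [hpow m]
          rw [Finset.smul_sum]
          simp_rw [smul_smul]
      _ = ∑ i, (∑ m ∈ Finset.range (p.natDegree + 1), p.coeff m * (A ^ m) i i0) • c i := by
          rw [Finset.sum_comm]
          simp_rw [Finset.sum_smul]
      _ = ∑ i, M i i0 • c i := by
          refine Finset.sum_congr rfl fun i _ => ?_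
          congr 1
          rw [hsum, Matrix.sum_apply]
          simp [Matrix.smul_apply]
  -- coefficients of b j in basis b are the Kronecker delta
  have hdelta : ∀ j i, (b j) i i0 = if i = j then 1 else 0 := by
    intro j
    have h1 : b j = ∑ i, (b j) i i0 • b i := key b hb3 hb4 _ (hb1 j)
    have h2 : ∑ i, ((b j) i i0 - if i = j then 1 else 0) • b i = 0 := by
      simp_rw [sub_smul, Finset.sum_sub_distrib, ← h1, ite_smul, one_smul, zero_smul]
      simp
    have := (Fintype.linearIndependent_iff.mp hb2) _ h2
    intro i
    exact sub_eq_zero.mp (this i)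
  funext j
  have h3 : b j = ∑ i, (b j) i i0 • b' i := key b' hb'3 hb'4 _ (hb1 j)
  rw [h3]
  simp_rw [hdelta j, ite_smul, one_smul, zero_smul]
  simp
end
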